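/- Let w ∈ [0,b]^n, g ∈ ℝ^n, A = {i : (w_i = 0 and g_i > 0) or (w_i = b and g_i < 0)}, and d̃_i = 0 for i ∈ A, d̃_i = -g_i otherwise. If d̃ ≠ 0, then d = d̃/‖d̃‖_2 minimizes ⟨g, d'⟩ over all feasible directions d' at w with ‖d'‖_2 ≤ 1. -/

import Mathlib

open Set Finset

/-! Feasibility of `d'` at `w` forces `d'ᵢ ≥ 0` where `wᵢ = 0` and `d'ᵢ ≤ 0` where `wᵢ = b`, so
`gᵢ d'ᵢ ≥ -d̃ᵢ d'ᵢ` in every coordinate: on the active set `d̃ᵢ = 0` and the signs of `gᵢ` and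
`d'ᵢ` agree, elsewhere `d̃ᵢ = -gᵢ`. Summing and applying Cauchy–Schwarz,
`⟨g, d'⟩ ≥ -⟨d̃, d'⟩ ≥ -‖d̃‖ ‖d'‖ ≥ -‖d̃‖ = ⟨g, d̃⟩ / ‖d̃‖`, the last step because `gᵢ d̃ᵢ = -d̃ᵢ²`. -/

def IsFeasibleDirection {ι : Type*} (b : ℝ) (w v : ι → ℝ) : Prop :=
  ∃ η₀ > (0 : ℝ), ∀ η : ℝ, 0 < η → η ≤ η₀ → ∀ i, w i + η * v i ∈ Icc (0 : ℝ) b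

noncomputable def projectedNegGradient {ι : Type*} (b : ℝ) (w g : ι → ℝ) (i : ι) : ℝ :=
  if (w i = 0 ∧ 0 < g i) ∨ (w i = b ∧ g i < 0) then 0 else -g i

section

variable {ι : Type*} {b : ℝ} {w g v : ι → ℝ}

lemma mul_projectedNegGradient (b : ℝ) (w g : ι → ℝ) (i : ι) :
    g i * projectedNegGradient b w g i = -projectedNegGradient b w g i ^ 2 := by
  unfold projectedNegGradient
  split_ifs <;> ring

namespace IsFeasibleDirection

lemma nonneg_of_eq_zero (hv : IsFeasibleDirection b w v) {i : ι} (hi : w i = 0) : 0 ≤ v i := by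
  obtain ⟨η₀, hη₀, hmem⟩ := hv
  have hlow := (hmem η₀ hη₀ le_rfl i).1
  rw [hi, zero_add] at hlow
  exact nonneg_of_mul_nonneg_right hlow hη₀

lemma nonpos_of_eq_bound (hv : IsFeasibleDirection b w v) {i : ι} (hi : w i = b) : v i ≤ 0 := by
  obtain ⟨η₀, hη₀, hmem⟩ := hv
  have hup := (hmem η₀ hη₀ le_rfl i).2
  rw [hi, add_le_iff_nonpos_right] at hup
  exact nonpos_of_mul_nonpos_right hup hη₀

lemma neg_projectedNegGradient_mul_le (hv : IsFeasibleDirection b w v) (i : ι) :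
    -(projectedNegGradient b w g i * v i) ≤ g i * v i := by
  unfold projectedNegGradient
  split_ifs with hA
  · rcases hA with ⟨hw, hg⟩ | ⟨hw, hg⟩
    · simpa using mul_nonneg hg.le (hv.nonneg_of_eq_zero hw)
    · simpa using mul_nonneg_of_nonpos_of_nonpos hg.le (hv.nonpos_of_eq_bound hw)
  · rw [neg_mul, neg_neg]

end IsFeasibleDirection

variable [Fintype ι]

lemma sum_mul_div_sqrt_of_mul_eq_neg_sq {d : ι → ℝ} (hgd : ∀ i, g i * d i = -d i ^ 2) :
    ∑ i, g i * (d i / √(∑ j, d j ^ 2)) = -√(∑ j, d j ^ 2) := by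
  simp_rw [← mul_div_assoc, ← Finset.sum_div, hgd, Finset.sum_neg_distrib, neg_div, Real.div_sqrt]

end

theorem projected_negative_gradient_steepest_general {n : ℕ} (b : ℝ)
    (w g : Fin n → ℝ)
    (d : Fin n → ℝ)
    (hd : ∀ i, d i = if (w i = 0 ∧ 0 < g i) ∨ (w i = b ∧ g i < 0) then 0 else -g i) :
    ∀ d' : Fin n → ℝ,
      (∃ η₀ > (0 : ℝ), ∀ η : ℝ, 0 < η → η ≤ η₀ → ∀ i, w i + η * d' i ∈ Icc (0 : ℝ) b) →
      Real.sqrt (∑ i, d' i ^ 2) ≤ 1 →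
      ∑ i, g i * (d i / Real.sqrt (∑ j, d j ^ 2)) ≤ ∑ i, g i * d' i := by
  intro v (hv : IsFeasibleDirection b w v) hv_le
  obtain rfl : d = projectedNegGradient b w g := funext hd
  set d := projectedNegGradient b w g
  rw [sum_mul_div_sqrt_of_mul_eq_neg_sq (mul_projectedNegGradient b w g)]
  calc -√(∑ j, d j ^ 2)
      ≤ -(√(∑ j, d j ^ 2) * √(∑ j, v j ^ 2)) :=
        neg_le_neg (mul_le_of_le_one_right (Real.sqrt_nonneg _) hv_le)
    _ ≤ -∑ i, d i * v i := neg_le_neg (Real.sum_mul_le_sqrt_mul_sqrt _ _ _)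
    _ = ∑ i, -(d i * v i) := (Finset.sum_neg_distrib ..).symm
    _ ≤ ∑ i, g i * v i := Finset.sum_le_sum fun i _ => hv.neg_projectedNegGradient_mul_le i

/-- For `w ∈ [0,b]ⁿ` and `g ∈ ℝⁿ`, let `d̃` be obtained from `-g` by zeroing out the active
set `A = {i : (wᵢ = 0 ∧ gᵢ > 0) ∨ (wᵢ = b ∧ gᵢ < 0)}`. If `d̃ ≠ 0`, then `d = d̃ / ‖d̃‖₂`
minimizes `⟨g, d'⟩` over all feasible directions `d'` at `w` with `‖d'‖₂ ≤ 1`. -/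
theorem projected_negative_gradient_steepest {n : ℕ} (b : ℝ) (hb : 0 < b)
    (w g : Fin n → ℝ) (hw : ∀ i, w i ∈ Icc (0 : ℝ) b)
    (d : Fin n → ℝ)
    (hd : ∀ i, d i = if (w i = 0 ∧ 0 < g i) ∨ (w i = b ∧ g i < 0) then 0 else -g i)
    (hdne : d ≠ 0) :
    ∀ d' : Fin n → ℝ,
      (∃ η₀ > (0 : ℝ), ∀ η : ℝ, 0 < η → η ≤ η₀ → ∀ i, w i + η * d' i ∈ Icc (0 : ℝ) b) →
      Real.sqrt (∑ i, d' i ^ 2) ≤ 1 →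
      ∑ i, g i * (d i / Real.sqrt (∑ j, d j ^ 2)) ≤ ∑ i, g i * d' i :=
  projected_negative_gradient_steepest_general b w g d hd
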